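/- arXiv:2402.09379 — 3 statements merged into one kernel-verified Lean document; each statement's English description precedes it below -/
import Mathlib

section
/- Let γ ∈ (0,1) and let s ≥ 1 be an integer. Suppose S ∈ {0,1}^{d×d} is a binary matrix such that every row and every column of S has at least γs and at most s nonzero entries. Let I ⊆ [d] be a set of indices with |I| ≥ 2d/(2+γ). Then the principal submatrix of S on rows and columns in I contains at least γds/(2+γ) nonzero entries, i.e. Σ_{i∈I} Σ_{j∈I} S_{i,j} ≥ γds/(2+γ). -/
open Matrix
open scoped Classical

/-- **Lemma (sparsity patterns overlap large principal submatrices).**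
If every row and column of the binary matrix `S ∈ {0,1}^{d×d}` has between `γs` and `s`
nonzero entries and `I ⊆ [d]` has `|I| ≥ 2d/(2+γ)`, then the principal submatrix of `S`
indexed by `I × I` has at least `γds/(2+γ)` nonzero entries. -/
theorem stmt5 {d s : ℕ} (hs : 1 ≤ s) (γ : ℝ) (hγ0 : 0 < γ) (hγ1 : γ < 1)
    (S : Matrix (Fin d) (Fin d) ℝ)
    (hS01 : ∀ i j, S i j = 0 ∨ S i j = 1)
    (hrow : ∀ i : Fin d, γ * s ≤ ∑ j, S i j ∧ ∑ j, S i j ≤ s)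
    (hcol : ∀ j : Fin d, γ * s ≤ ∑ i, S i j ∧ ∑ i, S i j ≤ s)
    (I : Finset (Fin d))
    (hI : 2 * (d : ℝ) / (2 + γ) ≤ I.card) :
    γ * d * s / (2 + γ) ≤ ∑ i ∈ I, ∑ j ∈ I, S i j := by
  have hnn : ∀ i j, (0 : ℝ) ≤ S i j := fun i j => by
    rcases hS01 i j with h | h <;> simp [h]
  have hsplit : ∀ i : Fin d,
      ∑ j ∈ I, S i j = (∑ j, S i j) - ∑ j ∈ Iᶜ, S i j := by
    intro i
    have := Finset.sum_add_sum_compl I (fun j => S i j)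
    linarith
  have key : ∑ i ∈ I, ∑ j ∈ I, S i j
      = (∑ i ∈ I, ∑ j, S i j) - ∑ i ∈ I, ∑ j ∈ Iᶜ, S i j := by
    simp_rw [hsplit, Finset.sum_sub_distrib]
  -- bound the cross term
  have hcross : ∑ i ∈ I, ∑ j ∈ Iᶜ, S i j ≤ ((d : ℝ) - I.card) * s := by
    have h1 : ∑ i ∈ I, ∑ j ∈ Iᶜ, S i j ≤ ∑ i, ∑ j ∈ Iᶜ, S i j := by
      apply Finset.sum_le_sum_of_subset_of_nonneg (Finset.subset_univ I)
      intro i _ _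
      exact Finset.sum_nonneg fun j _ => hnn i j
    have h2 : ∑ i, ∑ j ∈ Iᶜ, S i j = ∑ j ∈ Iᶜ, ∑ i, S i j := Finset.sum_comm
    have h3 : ∑ j ∈ Iᶜ, ∑ i, S i j ≤ ∑ j ∈ Iᶜ, (s : ℝ) :=
      Finset.sum_le_sum fun j _ => (hcol j).2
    have hcard : (Iᶜ : Finset (Fin d)).card = d - I.card := by
      simp [Finset.card_compl]
    have hle : I.card ≤ d := by simpa using Finset.card_le_card (Finset.subset_univ I)
    have h4 : ∑ j ∈ Iᶜ, (s : ℝ) = ((d : ℝ) - I.card) * s := by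
      rw [Finset.sum_const, hcard, nsmul_eq_mul, Nat.cast_sub hle]
    calc ∑ i ∈ I, ∑ j ∈ Iᶜ, S i j ≤ ∑ j ∈ Iᶜ, ∑ i, S i j := h2 ▸ h1
      _ ≤ ∑ j ∈ Iᶜ, (s : ℝ) := h3
      _ = ((d : ℝ) - I.card) * s := h4
  have hrows : (I.card : ℝ) * (γ * s) ≤ ∑ i ∈ I, ∑ j, S i j := by
    calc (I.card : ℝ) * (γ * s) = ∑ _i ∈ I, γ * (s : ℝ) := by
          rw [Finset.sum_const, nsmul_eq_mul]
      _ ≤ ∑ i ∈ I, ∑ j, S i j := Finset.sum_le_sum fun i _ => (hrow i).1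
  rw [key]
  have hcd : (I.card : ℝ) ≤ d := by
    exact_mod_cast (Finset.card_le_card (Finset.subset_univ I)).trans_eq (by simp)
  have hs' : (1 : ℝ) ≤ s := by exact_mod_cast hs
  have h2γ : (0 : ℝ) < 2 + γ := by linarith
  have hIc : 2 * (d : ℝ) ≤ (2 + γ) * I.card := by
    rw [div_le_iff₀ h2γ] at hI; linarith
  have htarget : γ * d * s / (2 + γ) ≤ (I.card : ℝ) * (γ * s) - ((d : ℝ) - I.card) * s := by
    rw [div_le_iff₀ h2γ]
    nlinarith [mul_le_mul_of_nonneg_right hIc (mul_nonneg (by linarith) (by positivity) : (0:ℝ) ≤ (γ + 1) * s)]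
  linarith
end

section
/- Let A ∈ ℝ^{n×k} and let S ∈ {0,1}^{n×k} be a binary matrix with exactly one nonzero entry in each row. Let v ∈ {−1,+1}^k be a random vector with independent Rademacher entries (each entry equals +1 with probability 1/2 and −1 with probability 1/2), and define c = Sv and y = c ∘ (Av), where ∘ denotes the entrywise product of vectors. Then E[y] = (S∘A)·1, where 1 is the all-ones vector, and E[ ‖y − (S∘A)·1‖₂² ] = ‖A − S∘A‖_F². -/
/-!
A Rademacher vector `v` has orthonormal second moments, `E[v_j v_j'] = δ_jj'`, so
`E[(w ⬝ v)(u ⬝ v)] = w ⬝ u` for all deterministic `w, u`; with `c = S v` this already gives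
`E[y_i] = S_i ⬝ A_i`. If row `i` of `S` is the indicator of the column `j₀`, then `c_i = v_j₀`
and, because `v_j₀² = 1`, `y_i - A_ij₀ = v_j₀ · (B_i ⬝ v)` with `B = A - S ∘ A`. Hence
`(y_i - A_ij₀)² = (B_i ⬝ v)²`, whose expectation is `‖B_i‖²` by the same identity.
-/

open MeasureTheory ProbabilityTheory Matrix
open scoped Classical

noncomputable def frobSq {n k : ℕ} (M : Matrix (Fin n) (Fin k) ℝ) : ℝ :=
  ∑ i, ∑ j, (M i j) ^ 2

def hadam {n k : ℕ} (S A : Matrix (Fin n) (Fin k) ℝ) : Matrix (Fin n) (Fin k) ℝ :=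
  fun i j => S i j * A i j

noncomputable def rademacher : Measure ℝ :=
  (1 / 2 : ENNReal) • Measure.dirac 1 + (1 / 2 : ENNReal) • Measure.dirac (-1)

section Rademacher

variable {Ω : Type*} [MeasurableSpace Ω] {μ : Measure Ω} {X Y : Ω → ℝ}

lemma integral_id_rademacher : ∫ x, x ∂rademacher = 0 := by
  have hint (a : ℝ) : Integrable (fun x : ℝ => x) ((1 / 2 : ENNReal) • Measure.dirac a) :=
    (integrable_dirac enorm_lt_top).smul_measure (by norm_num)
  rw [rademacher, integral_add_measure (hint 1) (hint (-1)), integral_smul_measure,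
    integral_smul_measure, integral_dirac, integral_dirac]
  norm_num

lemma ae_sq_eq_one_rademacher : ∀ᵐ x ∂rademacher, x ^ 2 = 1 := by
  simp [rademacher]

lemma integral_eq_zero_of_map_eq_rademacher (hX : Measurable X) (h : μ.map X = rademacher) :
    ∫ ω, X ω ∂μ = 0 := by
  rw [← integral_id_rademacher, ← h]
  exact (integral_map hX.aemeasurable aestronglyMeasurable_id).symm

lemma ae_sq_eq_one_of_map_eq_rademacher (hX : Measurable X) (h : μ.map X = rademacher) :
    ∀ᵐ ω ∂μ, X ω ^ 2 = 1 :=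
  (ae_map_iff hX.aemeasurable (measurableSet_eq_fun (by fun_prop) (by fun_prop))).mp
    (h ▸ ae_sq_eq_one_rademacher)

lemma integrable_mul_of_map_eq_rademacher [IsFiniteMeasure μ] (hX : Measurable X)
    (hY : Measurable Y) (hXr : μ.map X = rademacher) (hYr : μ.map Y = rademacher) :
    Integrable (fun ω => X ω * Y ω) μ := by
  refine (integrable_const (1 : ℝ)).mono' (hX.mul hY).aestronglyMeasurable ?_
  filter_upwards [ae_sq_eq_one_of_map_eq_rademacher hX hXr,
    ae_sq_eq_one_of_map_eq_rademacher hY hYr] with ω hXω hYω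
  rw [Real.norm_eq_abs, ← sq_le_one_iff_abs_le_one, mul_pow, hXω, hYω, one_mul]

end Rademacher

lemma dotProduct_mul_dotProduct_eq_sum {ι R : Type*} [CommSemiring R] [Fintype ι]
    (w u x : ι → R) :
    (w ⬝ᵥ x) * (u ⬝ᵥ x) = ∑ j, ∑ j', w j * u j' * (x j * x j') := by
  simp only [dotProduct, Finset.sum_mul_sum]
  exact Finset.sum_congr rfl fun j _ => Finset.sum_congr rfl fun j' _ => by ring

section RademacherFamily

variable {Ω ι : Type*} [MeasurableSpace Ω] {μ : Measure Ω} [IsProbabilityMeasure μ]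
  {v : Ω → ι → ℝ}

lemma integral_mul_eq_ite_of_map_eq_rademacher (hmeas : ∀ j, Measurable fun ω => v ω j)
    (hrad : ∀ j, μ.map (fun ω => v ω j) = rademacher)
    (hindep : Pairwise fun j j' => IndepFun (fun ω => v ω j) (fun ω => v ω j') μ) (j j' : ι) :
    ∫ ω, v ω j * v ω j' ∂μ = if j = j' then 1 else 0 := by
  split_ifs with h
  · subst h
    calc ∫ ω, v ω j * v ω j ∂μ = ∫ _, (1 : ℝ) ∂μ := by
          refine integral_congr_ae ?_
          filter_upwards [ae_sq_eq_one_of_map_eq_rademacher (hmeas j) (hrad j)] with ω hω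
          rw [← sq, hω]
      _ = 1 := by simp
  · rw [(hindep h).integral_fun_mul_eq_mul_integral (hmeas j).aestronglyMeasurable
      (hmeas j').aestronglyMeasurable, integral_eq_zero_of_map_eq_rademacher (hmeas j) (hrad j),
      zero_mul]

lemma integrable_dotProduct_mul_dotProduct [Fintype ι]
    (hmeas : ∀ j, Measurable fun ω => v ω j)
    (hrad : ∀ j, μ.map (fun ω => v ω j) = rademacher) (w u : ι → ℝ) :
    Integrable (fun ω => (w ⬝ᵥ v ω) * (u ⬝ᵥ v ω)) μ := by
  simp_rw [dotProduct_mul_dotProduct_eq_sum]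
  exact integrable_finsetSum _ fun j _ => integrable_finsetSum _ fun j' _ =>
    (integrable_mul_of_map_eq_rademacher (hmeas j) (hmeas j') (hrad j) (hrad j')).const_mul _

lemma integral_dotProduct_mul_dotProduct [Fintype ι] (hmeas : ∀ j, Measurable fun ω => v ω j)
    (hrad : ∀ j, μ.map (fun ω => v ω j) = rademacher)
    (hindep : Pairwise fun j j' => IndepFun (fun ω => v ω j) (fun ω => v ω j') μ)
    (w u : ι → ℝ) :
    ∫ ω, (w ⬝ᵥ v ω) * (u ⬝ᵥ v ω) ∂μ = w ⬝ᵥ u := by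
  have hint (j j' : ι) : Integrable (fun ω => w j * u j' * (v ω j * v ω j')) μ :=
    (integrable_mul_of_map_eq_rademacher (hmeas j) (hmeas j') (hrad j) (hrad j')).const_mul _
  simp_rw [dotProduct_mul_dotProduct_eq_sum]
  rw [integral_finsetSum _ fun j _ => integrable_finsetSum _ fun j' _ => hint j j']
  simp_rw [integral_finsetSum _ fun j' _ => hint _ j', integral_const_mul,
    integral_mul_eq_ite_of_map_eq_rademacher hmeas hrad hindep]
  simp [dotProduct]

end RademacherFamily

lemma exists_eq_single_of_card_filter_eq_one {ι M : Type*} [Fintype ι] [DecidableEq ι]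
    [Zero M] [One M] [DecidableEq M] (s : ι → M) (h01 : ∀ j, s j = 0 ∨ s j = 1)
    (hone : (Finset.univ.filter fun j => s j = 1).card = 1) : ∃ j, s = Pi.single j 1 := by
  obtain ⟨j, hj⟩ := Finset.card_eq_one.mp hone
  refine ⟨j, funext fun j' => ?_⟩
  rcases eq_or_ne j' j with rfl | hne
  · have hmem : j' ∈ Finset.univ.filter fun j => s j = 1 := hj ▸ Finset.mem_singleton_self j'
    simpa using hmem
  · rw [Pi.single_eq_of_ne hne]
    refine (h01 j').resolve_right fun h1 => hne ?_
    have hmem : j' ∈ Finset.univ.filter fun j => s j = 1 := by simp [h1]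
    simpa [hj] using hmem

lemma sq_mul_dotProduct_sub_eq {ι : Type*} [Fintype ι] [DecidableEq ι] (a x : ι → ℝ) (j : ι)
    (hx : x j ^ 2 = 1) :
    (x j * (a ⬝ᵥ x) - a j) ^ 2 = ((a - Pi.single j (a j)) ⬝ᵥ x) ^ 2 := by
  rw [sub_dotProduct, single_dotProduct]
  linear_combination ((a ⬝ᵥ x) ^ 2 - a j ^ 2) * hx

/-- **Lemma (coloring-based estimator for one-nonzero-per-row patterns).**
Let `S ∈ {0,1}^{n×k}` have exactly one nonzero per row, let `v ∈ {−1,+1}^k` have iid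
Rademacher entries, and set `c = Sv` and `y = c ∘ (Av)`. Then `E[y] = (S∘A)·1` and
`E[‖y − (S∘A)·1‖₂²] = ‖A − S∘A‖_F²`. -/
theorem stmt16 {n k : ℕ} {Ω : Type} [MeasureSpace Ω]
    [IsProbabilityMeasure (ℙ : Measure Ω)]
    (A S : Matrix (Fin n) (Fin k) ℝ)
    (hS01 : ∀ i j, S i j = 0 ∨ S i j = 1)
    (hrow : ∀ i, (Finset.univ.filter fun j => S i j = 1).card = 1)
    (v : Ω → Fin k → ℝ)
    (hvmeas : ∀ j, Measurable fun ω => v ω j)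
    (hvRad : ∀ j, Measure.map (fun ω => v ω j) ℙ
      = (1 / 2 : ENNReal) • Measure.dirac (1 : ℝ)
        + (1 / 2 : ENNReal) • Measure.dirac (-1 : ℝ))
    (hvindep : iIndepFun (fun j ω => v ω j) ℙ) :
    (∀ i, ∫ ω, (S *ᵥ v ω) i * (A *ᵥ v ω) i ∂ℙ
        = (hadam S A *ᵥ fun _ => (1 : ℝ)) i) ∧
    (∫ ω, ∑ i, ((S *ᵥ v ω) i * (A *ᵥ v ω) i
        - (hadam S A *ᵥ fun _ => (1 : ℝ)) i) ^ 2 ∂ℙ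
      = frobSq (A - hadam S A)) := by
  have hpair : Pairwise fun j j' => IndepFun (fun ω => v ω j) (fun ω => v ω j') ℙ :=
    fun j j' h => hvindep.indepFun h
  have hmean (i) : (hadam S A *ᵥ fun _ => (1 : ℝ)) i = S i ⬝ᵥ A i := by
    simp [hadam, mulVec, dotProduct]
  refine ⟨fun i => ?_, ?_⟩
  · rw [hmean]
    exact integral_dotProduct_mul_dotProduct hvmeas hvRad hpair (S i) (A i)
  obtain ⟨j₀, hj₀⟩ : ∃ j₀ : Fin n → Fin k, ∀ i, S i = Pi.single (j₀ i) 1 :=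
    ⟨_, fun i => (exists_eq_single_of_card_filter_eq_one (S i) (hS01 i) (hrow i)).choose_spec⟩
  have hB (i) : (A - hadam S A) i = A i - Pi.single (j₀ i) (A i (j₀ i)) := by
    ext j
    rcases eq_or_ne j (j₀ i) with rfl | hne
    · simp [hadam, hj₀ i]
    · simp [hadam, hj₀ i, hne]
  have hpt : ∀ᵐ ω ∂(ℙ : Measure Ω), ∑ i, ((S *ᵥ v ω) i * (A *ᵥ v ω) i
      - (hadam S A *ᵥ fun _ => (1 : ℝ)) i) ^ 2 = ∑ i, ((A - hadam S A) i ⬝ᵥ v ω) ^ 2 := by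
    have hsq : ∀ᵐ ω ∂(ℙ : Measure Ω), ∀ j, v ω j ^ 2 = 1 :=
      ae_all_iff.mpr fun j => ae_sq_eq_one_of_map_eq_rademacher (hvmeas j) (hvRad j)
    filter_upwards [hsq] with ω hω
    refine Finset.sum_congr rfl fun i _ => ?_
    change (S i ⬝ᵥ v ω * (A i ⬝ᵥ v ω) - _) ^ 2 = _
    rw [hmean, hj₀, single_one_dotProduct, single_one_dotProduct, hB]
    exact sq_mul_dotProduct_sub_eq _ _ _ (hω (j₀ i))
  rw [integral_congr_ae hpt, integral_finsetSum _ fun i _ => ?_]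
  · simp_rw [sq, integral_dotProduct_mul_dotProduct hvmeas hvRad hpair]
    simp [frobSq, dotProduct, sq]
  · simp_rw [sq]
    exact integrable_dotProduct_mul_dotProduct hvmeas hvRad _ _
end

section
/- For an integer k ≥ 1, define the binary matrix A ∈ {0,1}^{(k·k)×(k·k)} with rows and columns indexed by pairs in [k]×[k], by A_{(p,i),(q,j)} = 1 if and only if i = q or j = p. Then (a) every row and every column of A has exactly 2k − 1 nonzero entries, and (b) every pair of distinct columns of A has overlapping support: for any two column indices (q,j) and (q',j'), there exists a row index (p,i) with A_{(p,i),(q,j)} = 1 and A_{(p,i),(q',j')} = 1. (Consequently, any column partition of A into groups of columns with pairwise disjoint supports must use k² groups.) -/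
open Matrix
open scoped Classical

lemma stmt17_aux {k : ℕ} (i p : Fin k) :
    (Finset.univ.filter fun c : Fin k × Fin k => c.1 = i ∨ c.2 = p).card = 2 * k - 1 := by
  classical
  have h1 : (Finset.univ.filter fun c : Fin k × Fin k => c.1 = i)
      = {i} ×ˢ Finset.univ := by
    ext c; simp [Prod.ext_iff, eq_comm]
  have h2 : (Finset.univ.filter fun c : Fin k × Fin k => c.2 = p)
      = Finset.univ ×ˢ {p} := by
    ext c; simp [Prod.ext_iff, eq_comm]
  have hor : (Finset.univ.filter fun c : Fin k × Fin k => c.1 = i ∨ c.2 = p)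
      = ({i} ×ˢ Finset.univ) ∪ (Finset.univ ×ˢ {p}) := by
    rw [← h1, ← h2, ← Finset.filter_or]
  have hinter : (({i} ×ˢ Finset.univ) ∩ (Finset.univ ×ˢ ({p} : Finset (Fin k)))) = {(i, p)} := by
    ext c; simp [Prod.ext_iff, eq_comm]
  have := Finset.card_union_add_card_inter ({i} ×ˢ (Finset.univ : Finset (Fin k)))
    ((Finset.univ : Finset (Fin k)) ×ˢ {p})
  rw [hinter] at this
  simp only [Finset.card_product, Finset.card_singleton, Finset.card_univ,
    Fintype.card_fin, one_mul, mul_one] at this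
  have hk : 1 ≤ k := Fin.pos i
  rw [hor]
  omega

/-- **Example (a doubly sparse matrix that is hard for coloring methods).**
For `k ≥ 1`, the binary matrix `A` on `[k]×[k] × [k]×[k]` with
`A_{(p,i),(q,j)} = 1` iff `i = q` or `j = p` has exactly `2k − 1` nonzeros in each row
and each column, yet every pair of columns has overlapping support. -/
theorem stmt17 {k : ℕ} (hk : 1 ≤ k)
    (A : Matrix (Fin k × Fin k) (Fin k × Fin k) ℝ)
    (hA : ∀ p i q j : Fin k,
      A (p, i) (q, j) = if i = q ∨ j = p then 1 else 0) :
    (∀ rc : Fin k × Fin k,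
      (Finset.univ.filter fun c : Fin k × Fin k => A rc c = 1).card = 2 * k - 1) ∧
    (∀ cc : Fin k × Fin k,
      (Finset.univ.filter fun r : Fin k × Fin k => A r cc = 1).card = 2 * k - 1) ∧
    (∀ c c' : Fin k × Fin k, ∃ r : Fin k × Fin k, A r c = 1 ∧ A r c' = 1) := by
  have hval : ∀ r c : Fin k × Fin k, A r c = if r.2 = c.1 ∨ c.2 = r.1 then 1 else 0 := by
    intro r c
    rw [show r = (r.1, r.2) from rfl, show c = (c.1, c.2) from rfl, hA]
  have hone : ∀ r c : Fin k × Fin k, A r c = 1 ↔ (r.2 = c.1 ∨ c.2 = r.1) := by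
    intro r c
    rw [hval]
    split <;> simp_all
  refine ⟨fun rc => ?_, fun cc => ?_, fun c c' => ?_⟩
  · have : (Finset.univ.filter fun c : Fin k × Fin k => A rc c = 1)
        = Finset.univ.filter fun c : Fin k × Fin k => c.1 = rc.2 ∨ c.2 = rc.1 := by
      ext c; simp [hone, eq_comm, or_comm]
    rw [this, stmt17_aux]
  · have : (Finset.univ.filter fun r : Fin k × Fin k => A r cc = 1)
        = Finset.univ.filter fun r : Fin k × Fin k => r.1 = cc.2 ∨ r.2 = cc.1 := by
      ext r; simp [hone, eq_comm, or_comm]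
    rw [this, stmt17_aux]
  · exact ⟨(c'.2, c.1), (hone _ _).mpr (Or.inl rfl), (hone _ _).mpr (Or.inr rfl)⟩
end
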